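/- arXiv:2502.05326 — 4 statements merged into one kernel-verified Lean document; each statement's English description precedes it below -/
import Mathlib

section
/- For any μ ≠ 0 and Ψ, θ₃ ∈ ℝ, the triple u = (Ψ/(2πr)) e_r + (μ/r) e_θ, p = −|u|²/2, d = cos(−θ+θ₃) e_r + sin(−θ+θ₃) e_θ is a solution of the steady Ericksen–Leslie system on ℝ² ∖ {0}. -/
open Real MeasureTheory

noncomputable section

abbrev E (n : ℕ) := EuclideanSpace ℝ (Fin n)

/-- Partial derivative in the `i`-th coordinate direction. -/
def pd {n : ℕ} (f : E n → ℝ) (i : Fin n) (x : E n) : ℝ :=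
  fderiv ℝ f x (EuclideanSpace.single i 1)

/-- Euclidean Laplacian. -/
def lap {n : ℕ} (f : E n → ℝ) (x : E n) : ℝ := ∑ i, pd (pd f i) i x

/-- `|∇d|²` for a vector-valued map. -/
def gradSq {n : ℕ} (d : E n → E n) (x : E n) : ℝ :=
  ∑ i, ∑ k, (pd (fun y => d y k) i x) ^ 2

/-- The steady simplified Ericksen–Leslie system on `ℝⁿ \ {0}`:
`-Δu + (u·∇)u + ∇p = -div(∇d ⊙ ∇d)`, `div u = 0`, `Δd + |∇d|² d = (u·∇)d`. -/
def SEL {n : ℕ} (u : E n → E n) (p : E n → ℝ) (d : E n → E n) : Prop :=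
  ∀ x : E n, x ≠ 0 →
    (∀ i, -(lap (fun y => u y i) x) + (∑ j, u x j * pd (fun y => u y i) j x) + pd p i x
        = -(∑ j, pd (fun y => ∑ k, pd (fun z => d z k) i y * pd (fun z => d z k) j y) j x))
    ∧ (∑ i, pd (fun y => u y i) i x) = 0
    ∧ (∀ k, lap (fun y => d y k) x + gradSq d x * d x k
        = ∑ i, u x i * pd (fun y => d y k) i x)

/-- The radial unit vector `e_r = (cos θ, sin θ)`. -/
def er (x : E 2) : E 2 := ‖x‖⁻¹ • x

/-- The angular unit vector `e_θ = (-sin θ, cos θ)`. -/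
def eth (x : E 2) : E 2 := ‖x‖⁻¹ • (WithLp.equiv 2 (Fin 2 → ℝ)).symm ![-(x 1), x 0]

/-- The polar angle `θ` of a point of `ℝ²`. -/
def ang (x : E 2) : ℝ := Complex.arg ⟨x 0, x 1⟩

/-! The director is in fact constant, `cos (θ₃ - θ) e_r + sin (θ₃ - θ) e_θ = (cos θ₃, sin θ₃)`, so
every term containing `∇d` vanishes and the system reduces to the steady Navier–Stokes equations
with `p = -|u|²/2`. Identifying `ℝ²` with `ℂ`, the velocity is `u = c / z̄` with
`c = Ψ/(2π) + iμ`, so its components are the real parts of the holomorphic functions `c̄ / z` and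
`i c̄ / z`: they are harmonic, `div u = Re (-c̄/z² (1 + i²)) = 0`, and the convective term
`(u·∇)u = -|c|² x / |x|⁴` cancels `∇p`. -/

open Complex ComplexConjugate Filter Topology

lemma pd_congr {n : ℕ} {f g : E n → ℝ} {x : E n} (h : f =ᶠ[𝓝 x] g) (i : Fin n) :
    pd f i x = pd g i x := by
  rw [pd, pd, h.fderiv_eq]

lemma pd_eq_zero_of_eventuallyEq_const {n : ℕ} {f : E n → ℝ} {x : E n} {a : ℝ}
    (h : f =ᶠ[𝓝 x] fun _ => a) (i : Fin n) : pd f i x = 0 := by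
  rw [pd_congr h, pd]
  simp

def SteadyNavierStokes {n : ℕ} (u : E n → E n) (p : E n → ℝ) : Prop :=
  ∀ x : E n, x ≠ 0 →
    (∀ i, -(lap (fun y => u y i) x) + (∑ j, u x j * pd (fun y => u y i) j x) + pd p i x = 0)
    ∧ (∑ i, pd (fun y => u y i) i x) = 0

theorem sel_of_steadyNavierStokes_of_eq_const {n : ℕ} {u : E n → E n} {p : E n → ℝ}
    {d : E n → E n} (d₀ : E n) (hd : ∀ x, x ≠ 0 → d x = d₀) (hu : SteadyNavierStokes u p) :
    SEL u p d := by
  have hpd_zero {x : E n} (hx : x ≠ 0) {g : E n → ℝ} (hg : ∀ y, y ≠ 0 → g y = 0) (i : Fin n) :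
      pd g i x = 0 :=
    pd_eq_zero_of_eventuallyEq_const ((eventually_ne_nhds hx).mono hg) i
  have hpd_d {x : E n} (hx : x ≠ 0) (k i : Fin n) : pd (fun y => d y k) i x = 0 :=
    pd_eq_zero_of_eventuallyEq_const (a := d₀ k)
      ((eventually_ne_nhds hx).mono fun y hy => by simp only [hd y hy]) i
  intro x hx
  obtain ⟨hmom, hdiv⟩ := hu x hx
  refine ⟨fun i => ?_, hdiv, fun k => ?_⟩
  · rw [hmom i, eq_comm, neg_eq_zero]
    exact Finset.sum_eq_zero fun j _ => hpd_zero hx (fun y hy => by simp [hpd_d hy]) j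
  · simp [lap, gradSq, hpd_d hx, hpd_zero hx fun y hy => hpd_d hy k _]

def toComplex : E 2 ≃ₗᵢ[ℝ] ℂ := Complex.orthonormalBasisOneI.repr.symm

@[simp] lemma toComplex_re (y : E 2) : (toComplex y).re = y 0 := by simp [toComplex]

@[simp] lemma toComplex_im (y : E 2) : (toComplex y).im = y 1 := by simp [toComplex]

@[simp] lemma toComplex_symm_apply_zero (w : ℂ) : toComplex.symm w 0 = w.re := by
  simp [toComplex]

@[simp] lemma toComplex_symm_apply_one (w : ℂ) : toComplex.symm w 1 = w.im := by
  simp [toComplex]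

@[simp] lemma toComplex_single_zero : toComplex (EuclideanSpace.single 0 1) = 1 := by
  simp [toComplex]

@[simp] lemma toComplex_single_one : toComplex (EuclideanSpace.single 1 1) = I := by
  simp [toComplex]

lemma normSq_toComplex (y : E 2) : normSq (toComplex y) = ‖y‖ ^ 2 := by
  rw [← Complex.sq_norm, LinearIsometryEquiv.norm_map]

lemma re_mul_conj_toComplex_single (x : E 2) (i : Fin 2) :
    (toComplex (EuclideanSpace.single i 1) * conj (toComplex x)).re = x i := by
  fin_cases i <;> simp

lemma hasDerivAt_const_div {𝕜 : Type*} [NontriviallyNormedField 𝕜] (a : 𝕜) {z : 𝕜} (hz : z ≠ 0) :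
    HasDerivAt (fun w => a / w) (-a / z ^ 2) z := by
  simpa [div_eq_mul_inv, neg_div] using (hasDerivAt_inv hz).const_mul a

lemma pd_re_comp_toComplex {F : ℂ → ℂ} {F' : ℂ} {x : E 2} (h : HasDerivAt F F' (toComplex x))
    (i : Fin 2) :
    pd (fun y => (F (toComplex y)).re) i x = (F' * toComplex (EuclideanSpace.single i 1)).re := by
  have hc := reCLM.hasFDerivAt.comp x
    (h.comp_hasFDerivAt x toComplex.toContinuousLinearEquiv.toContinuousLinearMap.hasFDerivAt)
  rw [pd, show (fun y => (F (toComplex y)).re) = reCLM ∘ F ∘ toComplex from rfl, hc.fderiv]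
  simp

theorem lap_re_comp_toComplex {F : ℂ → ℂ} {s : Set ℂ} (hs : IsOpen s)
    (hF : DifferentiableOn ℂ F s) {x : E 2} (hx : toComplex x ∈ s) :
    lap (fun y => (F (toComplex y)).re) x = 0 := by
  have hpd (i : Fin 2) : pd (fun y => (F (toComplex y)).re) i =ᶠ[𝓝 x]
      fun y => (deriv F (toComplex y) * toComplex (EuclideanSpace.single i 1)).re := by
    filter_upwards [toComplex.continuous.continuousAt.preimage_mem_nhds (hs.mem_nhds hx)] with y hy
    exact pd_re_comp_toComplex ((hF _ hy).differentiableAt (hs.mem_nhds hy)).hasDerivAt i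
  have hF' := ((hF.deriv hs _ hx).differentiableAt (hs.mem_nhds hx)).hasDerivAt
  simp only [lap, Fin.sum_univ_two, pd_congr (hpd _) _]
  rw [pd_re_comp_toComplex (hF'.mul_const _), pd_re_comp_toComplex (hF'.mul_const _)]
  simp

def vortexSource (c : ℂ) (y : E 2) : E 2 := toComplex.symm (c / conj (toComplex y))

lemma vortexSource_apply (c : ℂ) (y : E 2) (k : Fin 2) :
    vortexSource c y k = (conj c * toComplex (EuclideanSpace.single k 1) / toComplex y).re := by
  fin_cases k
  · simp [vortexSource, div_re]
  · simp [vortexSource, div_re, div_im]; ring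

lemma norm_vortexSource (c : ℂ) (y : E 2) : ‖vortexSource c y‖ = ‖c‖ / ‖y‖ := by
  simp [vortexSource]

lemma pd_vortexSource (c : ℂ) {x : E 2} (hx : x ≠ 0) (k j : Fin 2) :
    pd (fun y => vortexSource c y k) j x
      = (-(conj c * toComplex (EuclideanSpace.single k 1)) / toComplex x ^ 2
          * toComplex (EuclideanSpace.single j 1)).re := by
  simp_rw [vortexSource_apply]
  exact pd_re_comp_toComplex (hasDerivAt_const_div _ (by simpa using hx)) j

lemma lap_vortexSource (c : ℂ) {x : E 2} (hx : x ≠ 0) (k : Fin 2) :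
    lap (fun y => vortexSource c y k) x = 0 := by
  simp_rw [vortexSource_apply]
  exact lap_re_comp_toComplex isOpen_ne
    ((differentiableOn_const _).div differentiableOn_id fun _ hz => hz) (by simpa using hx)

lemma pd_neg_norm_vortexSource_sq (c : ℂ) {x : E 2} (hx : x ≠ 0) (i : Fin 2) :
    pd (fun y => -‖vortexSource c y‖ ^ 2 / 2) i x = ‖c‖ ^ 2 * x i / ‖x‖ ^ 4 := by
  have hp : (fun y => -‖vortexSource c y‖ ^ 2 / 2) = fun y => (-‖c‖ ^ 2 / 2) / ‖y‖ ^ 2 := by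
    ext y; rw [norm_vortexSource]; ring
  have hx' : ‖x‖ ^ 2 ≠ 0 := by simpa using hx
  have h := (hasDerivAt_const_div (-‖c‖ ^ 2 / 2) hx').comp_hasFDerivAt x
    (hasStrictFDerivAt_norm_sq x).hasFDerivAt
  rw [hp, pd, show (fun y : E 2 => (-‖c‖ ^ 2 / 2) / ‖y‖ ^ 2) = _ ∘ fun y => ‖y‖ ^ 2 from rfl,
    h.fderiv]
  simp [EuclideanSpace.inner_single_right]
  field_simp

lemma vortexSource_convection_re (c e z : ℂ) :
    (conj c / z).re * (-(conj c * e) / z ^ 2).re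
        + (conj c * I / z).re * (-(conj c * e) / z ^ 2 * I).re
      = -(‖c‖ ^ 2 * (e * conj z).re / ‖z‖ ^ 4) := by
  rcases eq_or_ne z 0 with rfl | hz
  · simp
  have hz' : normSq z ≠ 0 := by simpa using hz
  rw [show ‖z‖ ^ 4 = normSq z ^ 2 by rw [normSq_eq_norm_sq]; ring, ← normSq_eq_norm_sq]
  simp only [div_re, div_im, mul_re, mul_im, sq, conj_re, conj_im, I_re, I_im, neg_re, neg_im,
    normSq_mul]
  field_simp
  rw [normSq_apply, normSq_apply]
  ring

lemma sum_vortexSource_mul_pd (c : ℂ) {x : E 2} (hx : x ≠ 0) (i : Fin 2) :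
    ∑ j, vortexSource c x j * pd (fun y => vortexSource c y i) j x
      = -(‖c‖ ^ 2 * x i / ‖x‖ ^ 4) := by
  rw [Fin.sum_univ_two, pd_vortexSource c hx, pd_vortexSource c hx]
  simp only [vortexSource_apply, toComplex_single_zero, toComplex_single_one, mul_one]
  rw [vortexSource_convection_re, re_mul_conj_toComplex_single, LinearIsometryEquiv.norm_map]

theorem steadyNavierStokes_vortexSource (c : ℂ) :
    SteadyNavierStokes (vortexSource c) fun y => -‖vortexSource c y‖ ^ 2 / 2 := by
  intro x hx
  refine ⟨fun i => ?_, ?_⟩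
  · rw [lap_vortexSource c hx, sum_vortexSource_mul_pd c hx, pd_neg_norm_vortexSource_sq c hx]
    ring
  · rw [Fin.sum_univ_two, pd_vortexSource c hx, pd_vortexSource c hx]
    simp only [toComplex_single_zero, toComplex_single_one, mul_one]
    rw [show -(conj c * I) / toComplex x ^ 2 * I = -(-conj c / toComplex x ^ 2) by
      ring_nf; rw [I_sq]; ring]
    simp

lemma velocity_eq_vortexSource (Ψ μ : ℝ) (y : E 2) :
    (Ψ / (2 * π * ‖y‖)) • er y + (μ / ‖y‖) • eth y = vortexSource ⟨Ψ / (2 * π), μ⟩ y := by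
  ext k
  rw [vortexSource_apply]
  fin_cases k <;> simp [er, eth, div_re, normSq_toComplex] <;> field_simp
  ring

lemma director_eq (θ₃ : ℝ) {y : E 2} (hy : y ≠ 0) :
    Real.cos (-(ang y) + θ₃) • er y + Real.sin (-(ang y) + θ₃) • eth y
      = !₂[Real.cos θ₃, Real.sin θ₃] := by
  have hz : (⟨y 0, y 1⟩ : ℂ) = toComplex y := by apply Complex.ext <;> simp
  have hz0 : toComplex y ≠ 0 := by simpa using hy
  have hy' : ‖y‖ ≠ 0 := by simpa using hy
  have h : ‖y‖ ^ 2 = y 0 ^ 2 + y 1 ^ 2 := by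
    rw [← normSq_toComplex, normSq_apply]; simp; ring
  ext k
  fin_cases k <;> simp [er, eth, ang, hz, Real.cos_add, Real.sin_add, cos_arg hz0, sin_arg] <;>
    field_simp
  · linear_combination (-Real.cos θ₃) * h
  · linear_combination (-Real.sin θ₃) * h

theorem stmt1_general (μ Ψ θ₃ : ℝ) :
    SEL (fun x => (Ψ / (2 * π * ‖x‖)) • er x + (μ / ‖x‖) • eth x)
      (fun x => -‖(Ψ / (2 * π * ‖x‖)) • er x + (μ / ‖x‖) • eth x‖ ^ 2 / 2)
      (fun x => Real.cos (-(ang x) + θ₃) • er x + Real.sin (-(ang x) + θ₃) • eth x) := by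
  simp only [velocity_eq_vortexSource]
  exact sel_of_steadyNavierStokes_of_eq_const _ (fun x hx => director_eq θ₃ hx)
    (steadyNavierStokes_vortexSource _)

/-- for any `μ ≠ 0` and `Ψ, θ₃ ∈ ℝ`, the triple
`u = (Ψ/(2πr)) e_r + (μ/r) e_θ`, `p = -|u|²/2`,
`d = cos(-θ+θ₃) e_r + sin(-θ+θ₃) e_θ`
solves the steady Ericksen–Leslie system on `ℝ² \ {0}`. -/
theorem stmt1 (μ Ψ θ₃ : ℝ) (hμ : μ ≠ 0) :
    SEL (fun x => (Ψ / (2 * π * ‖x‖)) • er x + (μ / ‖x‖) • eth x)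
      (fun x => -‖(Ψ / (2 * π * ‖x‖)) • er x + (μ / ‖x‖) • eth x‖ ^ 2 / 2)
      (fun x => Real.cos (-(ang x) + θ₃) • er x + Real.sin (-(ang x) + θ₃) • eth x) :=
  stmt1_general μ Ψ θ₃

end
end

section
/- Let v ≠ 0 be a real constant and suppose ξ : ℝ → ℝ is twice differentiable, satisfies ξ'' = v(ξ' + 1) on ℝ, and satisfies the angular periodicity condition ξ(θ + 2π) − ξ(θ) ∈ 2πℤ for all θ. Then ξ' + 1 ≡ 0, i.e. ξ(θ) = −θ + θ₁ for some constant θ₁. -/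
open Real

/-!
The jump `ξ (θ + 2π) - ξ θ` is continuous with values in `2πℤ`, hence constant, so `g = ξ' + 1`
is `2π`-periodic. But `g' = v g` forces `g θ = g 0 · exp (v θ)`, which for `v ≠ 0` is periodic
only if `g 0 = 0`.
-/

theorem Continuous.eq_of_forall_mem_zmultiples {X : Type*} [TopologicalSpace X]
    [PreconnectedSpace X] {a : ℝ} {f : X → ℝ} (hf : Continuous f)
    (hmem : ∀ x, f x ∈ AddSubgroup.zmultiples a) (x y : X) : f x = f y :=
  isPreconnected_univ.constant_of_mapsTo
    (isDiscrete_iff_discreteTopology.mpr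
      (inferInstanceAs (DiscreteTopology (AddSubgroup.zmultiples a)))) hf.continuousOn
    (fun x _ => hmem x) trivial trivial

theorem eq_mul_exp_of_hasDerivAt_mul_self {g : ℝ → ℝ} {v : ℝ}
    (hg : ∀ x, HasDerivAt g (v * g x) x) (x : ℝ) : g x = g 0 * exp (v * x) := by
  have hderiv : ∀ t, HasDerivAt (fun t => g t * exp (-v * t)) 0 t := by
    intro t
    refine ((hg t).fun_mul ((hasDerivAt_id' t).const_mul (-v)).exp).congr_deriv ?_
    ring
  have hconst := is_const_of_deriv_eq_zero (fun t => (hderiv t).differentiableAt)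
    (fun t => (hderiv t).deriv) x 0
  simp only [mul_zero, exp_zero, mul_one] at hconst
  rw [← hconst, mul_assoc, ← exp_add, neg_mul, neg_add_cancel, exp_zero, mul_one]

theorem periodic_deriv_of_sub_eq_const {f : ℝ → ℝ} (hf : Differentiable ℝ f) {T c : ℝ}
    (hc : ∀ x, f (x + T) - f x = c) : Function.Periodic (deriv f) T := by
  intro x
  have hsub : deriv (fun x => f (x + T) - f x) x = 0 := by
    simp only [hc, deriv_const]
  rwa [deriv_fun_sub (by fun_prop) (hf x), deriv_comp_add_const, sub_eq_zero] at hsub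

theorem eq_zero_of_periodic_mul_exp {c v T : ℝ} (hv : v ≠ 0) (hT : T ≠ 0)
    (hper : Function.Periodic (fun x => c * exp (v * x)) T) : c = 0 := by
  have h := hper 0
  simp only [mul_zero, exp_zero, mul_one, zero_add] at h
  by_contra hc
  have : exp (v * T) = 1 := by simpa [hc] using h
  rw [exp_eq_one_iff, mul_eq_zero] at this
  tauto

theorem eq_neg_add_of_deriv_eq_neg_one {f : ℝ → ℝ} (hf : Differentiable ℝ f)
    (hderiv : ∀ x, deriv f x = -1) (x : ℝ) : f x = -x + f 0 := by
  have hid : ∀ t, HasDerivAt (fun t => f t + t) 0 t := fun t => by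
    simpa [hderiv t] using (hf t).hasDerivAt.fun_add (hasDerivAt_id' t)
  have := is_const_of_deriv_eq_zero (fun t => (hid t).differentiableAt)
    (fun t => (hid t).deriv) x 0
  simp only [add_zero] at this
  linarith

/-- if `ξ'' = v(ξ'+1)` with `v ≠ 0` and `ξ(θ+2π) ≡ ξ(θ) (mod 2π)`,
then `ξ' + 1 ≡ 0`, i.e. `ξ(θ) = -θ + θ₁`. -/
theorem stmt2 (v : ℝ) (hv : v ≠ 0) (ξ : ℝ → ℝ)
    (hdiff : ∀ θ, DifferentiableAt ℝ ξ θ)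
    (hdiff2 : ∀ θ, DifferentiableAt ℝ (deriv ξ) θ)
    (hode : ∀ θ, deriv (deriv ξ) θ = v * (deriv ξ θ + 1))
    (hper : ∀ θ, ∃ k : ℤ, ξ (θ + 2 * π) - ξ θ = 2 * π * k) :
    (∀ θ, deriv ξ θ + 1 = 0) ∧ ∃ θ₁ : ℝ, ∀ θ, ξ θ = -θ + θ₁ := by
  have hξ : Differentiable ℝ ξ := hdiff
  have hξc : Continuous ξ := hξ.continuous
  set g : ℝ → ℝ := fun θ => deriv ξ θ + 1
  have hg : ∀ θ, HasDerivAt g (v * g θ) θ := fun θ => by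
    simpa [g, hode θ] using (hdiff2 θ).hasDerivAt.add_const 1
  have hjump_mem : ∀ θ, ξ (θ + 2 * π) - ξ θ ∈ AddSubgroup.zmultiples (2 * π) := fun θ => by
    obtain ⟨k, hk⟩ := hper θ
    exact AddSubgroup.mem_zmultiples_iff.mpr ⟨k, by rw [hk, zsmul_eq_mul, mul_comm]⟩
  have hjump : ∀ θ, ξ (θ + 2 * π) - ξ θ = ξ (0 + 2 * π) - ξ 0 := fun θ =>
    Continuous.eq_of_forall_mem_zmultiples (by fun_prop) hjump_mem θ 0
  have hg_periodic : Function.Periodic g (2 * π) := fun θ => by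
    simp only [g, periodic_deriv_of_sub_eq_const hξ hjump θ]
  have hg_exp : g = fun θ => g 0 * exp (v * θ) := funext (eq_mul_exp_of_hasDerivAt_mul_self hg)
  have hg0 : g 0 = 0 :=
    eq_zero_of_periodic_mul_exp hv two_pi_pos.ne' (hg_exp ▸ hg_periodic)
  have hsum : ∀ θ, deriv ξ θ + 1 = 0 := fun θ => by
    simpa [hg0] using congrFun hg_exp θ
  exact ⟨hsum, ξ 0,
    eq_neg_add_of_deriv_eq_neg_one hξ fun θ => eq_neg_of_add_eq_zero_left (hsum θ)⟩
end

section
/- Let v ∈ ℝ, C ∈ ℝ, and let f : ℝ → ℝ be a C² function with period 2π satisfying f'' − v f' + f² + 4f + v² + C = 0 on ℝ, where v ≠ 0. Then f is constant. (More precisely: multiplying by f' and integrating over a period yields v ∫₀^{2π} (f')² dθ = 0, hence f' ≡ 0.) -/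
/-!
The equation is Newton's equation `f'' = v f' - V'(f)` for the cubic potential
`V(y) = y³/3 + 2y² + (v² + C) y`, with the linear term `v f'` acting as (possibly negative) friction.
Along a solution the energy `f'²/2 + V(f)` has derivative `v f'²`; over a period the energy
returns to its initial value, so `v ∫ f'² = 0`, and `v ≠ 0` forces the continuous `f'` to vanish.
-/

open Real Set intervalIntegral

theorem Function.Periodic.deriv {𝕜 F : Type*} [NontriviallyNormedField 𝕜] [NormedAddCommGroup F]
    [NormedSpace 𝕜 F] {f : 𝕜 → F} {T : 𝕜} (h : Function.Periodic f T) :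
    Function.Periodic (deriv f) T := fun x => by
  rw [← deriv_comp_add_const, h.funext]

theorem Function.Periodic.eq_zero_of_integral_eq_zero {g : ℝ → ℝ} {T : ℝ} (hT : 0 < T)
    (hper : Function.Periodic g T) (hg : Continuous g) (hnonneg : ∀ x, 0 ≤ g x)
    (hint : ∫ x in (0 : ℝ)..T, g x = 0) (x : ℝ) : g x = 0 := by
  obtain ⟨y, hy, hxy⟩ := hper.exists_mem_Ico₀ hT x
  by_contra hx
  have hpos : 0 < ∫ x in (0 : ℝ)..T, g x :=
    integral_pos hT hg.continuousOn (fun z _ => hnonneg z)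
      ⟨y, Ico_subset_Icc_self hy, hxy ▸ (hnonneg x).lt_of_ne' hx⟩
  exact hpos.ne' hint

theorem hasDerivAt_energy_of_dissipative {f V V' : ℝ → ℝ} {v : ℝ} (hV : ∀ y, HasDerivAt V (V' y) y)
    (hf : Differentiable ℝ f) (hf' : Differentiable ℝ (deriv f))
    (hode : ∀ θ, deriv (deriv f) θ - v * deriv f θ + V' (f θ) = 0) (θ : ℝ) :
    HasDerivAt (fun θ => deriv f θ ^ 2 / 2 + V (f θ)) (v * deriv f θ ^ 2) θ := by
  refine ((((hf' θ).hasDerivAt.fun_pow 2).div_const 2).add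
    ((hV (f θ)).comp θ (hf θ).hasDerivAt)).congr_deriv ?_
  push_cast
  linear_combination deriv f θ * hode θ

theorem deriv_eq_zero_of_periodic_of_dissipative {f V V' : ℝ → ℝ} {v T : ℝ}
    (hper : Function.Periodic f T) (hv : v ≠ 0) (hT : 0 < T) (hV : ∀ y, HasDerivAt V (V' y) y)
    (hf : Differentiable ℝ f) (hf' : Differentiable ℝ (deriv f))
    (hode : ∀ θ, deriv (deriv f) θ - v * deriv f θ + V' (f θ) = 0) (θ : ℝ) :
    deriv f θ = 0 := by
  have henergy : deriv f T ^ 2 / 2 + V (f T) = deriv f 0 ^ 2 / 2 + V (f 0) := by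
    rw [hper.eq, hper.deriv.eq]
  have hcont : Continuous (deriv f) := hf'.continuous
  have hint : ∫ θ in (0 : ℝ)..T, v * deriv f θ ^ 2 = 0 := by
    rw [integral_eq_sub_of_hasDerivAt (fun θ _ => hasDerivAt_energy_of_dissipative hV hf hf' hode θ)
      ((continuous_const.mul (hcont.pow 2)).intervalIntegrable 0 T), henergy, sub_self]
  rw [integral_const_mul, mul_eq_zero, or_iff_right hv] at hint
  exact pow_eq_zero_iff two_ne_zero |>.mp <|
    (hper.deriv.comp (· ^ 2)).eq_zero_of_integral_eq_zero hT ((continuous_pow 2).comp hcont)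
      (fun _ => sq_nonneg _) hint θ

/-- a `2π`-periodic `C²` solution of
`f'' - v f' + f² + 4f + v² + C = 0` with `v ≠ 0` must be constant. -/
theorem stmt3 (v C : ℝ) (hv : v ≠ 0) (f : ℝ → ℝ)
    (hf : ContDiff ℝ 2 f) (hper : Function.Periodic f (2 * π))
    (hode : ∀ θ, deriv (deriv f) θ - v * deriv f θ + (f θ) ^ 2 + 4 * f θ + v ^ 2 + C = 0) :
    (∀ θ, deriv f θ = 0) ∧ ∃ a : ℝ, ∀ θ, f θ = a := by
  have hV (y : ℝ) : HasDerivAt (fun y => y ^ 3 / 3 + 2 * y ^ 2 + (v ^ 2 + C) * y)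
      (y ^ 2 + 4 * y + v ^ 2 + C) y := by
    refine (((((hasDerivAt_id y).fun_pow 3).div_const 3).add
      (((hasDerivAt_id y).fun_pow 2).const_mul 2)).add
      ((hasDerivAt_id y).const_mul (v ^ 2 + C))).congr_deriv ?_
    simp only [id]
    ring
  have hf1 : Differentiable ℝ f := hf.differentiable two_ne_zero
  have hderiv : ∀ θ, deriv f θ = 0 :=
    deriv_eq_zero_of_periodic_of_dissipative hper hv two_pi_pos hV hf1 hf.differentiable_deriv_two
      fun θ => by linear_combination hode θ
  exact ⟨hderiv, f 0, fun θ => is_const_of_deriv_eq_zero hf1 hderiv θ 0⟩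
end

section
/- Let n ≥ 2 and let p : ℝⁿ ∖ {0} → ℝ be a smooth function satisfying |∇p(x)| ≤ C₁/|x|³ for all x ≠ 0. Define p̄(r) as the average of p over the sphere of radius r. Then lim_{r→∞} p̄(r) exists and is finite, and if this limit is 0, then |p(x)| ≤ 2C₁/|x|² for all x ≠ 0. -/
open Real MeasureTheory Metric Filter
open scoped RealInnerProductSpace NNReal ENNReal
set_option maxHeartbeats 1000000

noncomputable section

/-- The radial derivative `∂/∂|x|` of the `k`-th component of `d`. -/
def radDer {n : ℕ} (d : E n → E n) (k : Fin n) (x : E n) : ℝ :=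
  fderiv ℝ (fun y => d y k) x (‖x‖⁻¹ • x)

/-- The spherical average `p̄(r) = (1/|∂B₁|) ∫_{∂B₁} p(rω) dσ(ω)`. -/
def pbar {n : ℕ} (p : E n → ℝ) (r : ℝ) : ℝ :=
  (μH[(n : ℝ) - 1] (Metric.sphere (0 : E n) 1)).toReal⁻¹ *
    ∫ ω in Metric.sphere (0 : E n) 1, p (r • ω) ∂ μH[(n : ℝ) - 1]

lemma aux_radial {n : ℕ} {C₁ : ℝ} {p : E n → ℝ}
    (hdiff : ∀ x : E n, x ≠ 0 → HasFDerivAt p (fderiv ℝ p x) x)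
    (hgrad : ∀ x : E n, x ≠ 0 → ‖fderiv ℝ p x‖ ≤ C₁ / ‖x‖ ^ 3)
    {ω : E n} (hω : ‖ω‖ = 1) {r s : ℝ} (hr : 0 < r) (hrs : r ≤ s) :
    |p (s • ω) - p (r • ω)| ≤ C₁ / 2 * ((r ^ 2)⁻¹ - (s ^ 2)⁻¹) := by
  have hsmul : ∀ t : ℝ, 0 < t → ‖t • ω‖ = t := by
    intro t ht
    rw [norm_smul, hω, mul_one, Real.norm_eq_abs, abs_of_pos ht]
  have hne : ∀ t : ℝ, 0 < t → t • ω ≠ 0 := by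
    intro t ht h
    have := hsmul t ht
    rw [h, norm_zero] at this
    linarith
  have key : ∀ q : E n → ℝ,
      (∀ x : E n, x ≠ 0 → HasFDerivAt q (fderiv ℝ q x) x) →
      (∀ x : E n, x ≠ 0 → ‖fderiv ℝ q x‖ ≤ C₁ / ‖x‖ ^ 3) →
      q (s • ω) - q (r • ω) ≤ C₁ / 2 * ((r ^ 2)⁻¹ - (s ^ 2)⁻¹) := by
    intro q hdq hgq
    set F : ℝ → ℝ := fun t => q (t • ω) + C₁ / 2 * (t ^ 2)⁻¹ with hF
    have hder : ∀ t : ℝ, 0 < t →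
        HasDerivAt F (fderiv ℝ q (t • ω) ω + C₁ / 2 * (-(2 * t ^ (2-1)) / (t ^ 2) ^ 2)) t := by
      intro t ht
      have h1 : HasDerivAt (fun u : ℝ => u • ω) ω t := by
        simpa using (hasDerivAt_id t).smul_const ω
      have h2 : HasDerivAt (fun u : ℝ => q (u • ω)) (fderiv ℝ q (t • ω) ω) t :=
        (hdq _ (hne t ht)).comp_hasDerivAt t h1
      have h3 : HasDerivAt (fun u : ℝ => (u ^ 2)⁻¹) (-(2 * t ^ (2-1)) / (t ^ 2) ^ 2) t := by
        have h := (hasDerivAt_pow 2 t).inv (pow_ne_zero 2 ht.ne')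
        simp only [Nat.cast_ofNat] at h
        exact h
      exact h2.add (h3.const_mul (C₁ / 2))
    have hAnti : AntitoneOn F (Set.Icc r s) := by
      apply antitoneOn_of_deriv_nonpos (convex_Icc r s)
      · intro t ht
        exact (hder t (lt_of_lt_of_le hr ht.1)).continuousAt.continuousWithinAt
      · intro t ht
        rw [interior_Icc] at ht
        exact (hder t (hr.trans ht.1)).differentiableAt.differentiableWithinAt
      · intro t ht
        rw [interior_Icc] at ht
        have ht0 : 0 < t := hr.trans ht.1
        rw [(hder t ht0).deriv]
        have hb : fderiv ℝ q (t • ω) ω ≤ C₁ / t ^ 3 := by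
          calc fderiv ℝ q (t • ω) ω ≤ |fderiv ℝ q (t • ω) ω| := le_abs_self _
            _ ≤ ‖fderiv ℝ q (t • ω)‖ * ‖ω‖ := (fderiv ℝ q (t • ω)).le_opNorm ω
            _ = ‖fderiv ℝ q (t • ω)‖ := by rw [hω, mul_one]
            _ ≤ C₁ / ‖t • ω‖ ^ 3 := hgq _ (hne t ht0)
            _ = C₁ / t ^ 3 := by rw [hsmul t ht0]
        have harith : C₁ / 2 * (-(2 * t ^ (2-1)) / (t ^ 2) ^ 2) = -(C₁ / t ^ 3) := by
          field_simp
          ring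
        rw [harith]
        linarith
    have h := hAnti (Set.left_mem_Icc.mpr hrs) (Set.right_mem_Icc.mpr hrs) hrs
    simp only [hF] at h
    linarith
  have h1 := key p hdiff hgrad
  have h2 : p (r • ω) - p (s • ω) ≤ C₁ / 2 * ((r ^ 2)⁻¹ - (s ^ 2)⁻¹) := by
    have hd' : ∀ x : E n, x ≠ 0 → HasFDerivAt (fun y => -p y) (fderiv ℝ (fun y => -p y) x) x := by
      intro x hx
      have := (hdiff x hx).neg
      rwa [show -fderiv ℝ p x = fderiv ℝ (fun y => -p y) x from (fderiv_neg).symm] at this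
    have hg' : ∀ x : E n, x ≠ 0 → ‖fderiv ℝ (fun y => -p y) x‖ ≤ C₁ / ‖x‖ ^ 3 := by
      intro x hx
      rw [fderiv_fun_neg, norm_neg]
      exact hgrad x hx
    have h := key (fun y => -p y) hd' hg'
    linarith
  rw [abs_sub_le_iff]
  exact ⟨h1, h2⟩


lemma aux_orth {m : ℕ} (hm : 1 ≤ m) (x : E (m+1)) (hx : x ≠ 0) :
    ∃ z : E (m+1), ‖z‖ = 1 ∧ ⟪x, z⟫ = 0 := by
  have hx' : 0 < ‖x‖ := norm_pos_iff.mpr hx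
  have hs2 : (0:ℝ) < ‖x‖ ^ 2 := by positivity
  have horth : ∀ v : E (m+1), ⟪x, v - (⟪x, v⟫ / ‖x‖ ^ 2) • x⟫ = 0 := by
    intro v
    rw [inner_sub_right, real_inner_smul_right, real_inner_self_eq_norm_sq]
    field_simp
    ring
  have hnorm : ∀ w : E (m+1), w ≠ 0 → ⟪x, w⟫ = 0 → ∃ z : E (m+1), ‖z‖ = 1 ∧ ⟪x, z⟫ = 0 := by
    intro w hw hxw
    refine ⟨‖w‖⁻¹ • w, ?_, ?_⟩
    · rw [norm_smul, norm_inv, norm_norm, inv_mul_cancel₀ (norm_ne_zero_iff.mpr hw)]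
    · rw [real_inner_smul_right, hxw, mul_zero]
  set i0 : Fin (m+1) := ⟨0, by omega⟩
  set i1 : Fin (m+1) := ⟨1, by omega⟩
  have hi : i1 ≠ i0 := by simp [i0, i1, Fin.ext_iff]
  set v0 : E (m+1) := EuclideanSpace.single i0 (1:ℝ) with hv0
  set v1 : E (m+1) := EuclideanSpace.single i1 (1:ℝ) with hv1
  by_cases h0 : v0 - (⟪x, v0⟫ / ‖x‖ ^ 2) • x = 0
  · by_cases h1 : v1 - (⟪x, v1⟫ / ‖x‖ ^ 2) • x = 0
    · exfalso
      rw [sub_eq_zero] at h0 h1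
      set c0 : ℝ := ⟪x, v0⟫ / ‖x‖ ^ 2
      set c1 : ℝ := ⟪x, v1⟫ / ‖x‖ ^ 2
      have A : (1:ℝ) = c0 * x i0 := by
        have := congrArg (fun v => v i0) h0
        simpa [hv0, EuclideanSpace.single_apply] using this
      have B : (0:ℝ) = c0 * x i1 := by
        have := congrArg (fun v => v i1) h0
        simpa [hv0, EuclideanSpace.single_apply, hi] using this
      have C : (1:ℝ) = c1 * x i1 := by
        have := congrArg (fun v => v i1) h1
        simpa [hv1, EuclideanSpace.single_apply] using this
      have hc0 : c0 ≠ 0 := by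
        intro h
        rw [h, zero_mul] at A
        exact one_ne_zero A
      have hxi1 : x i1 = 0 := by
        rcases mul_eq_zero.mp B.symm with h | h
        · exact absurd h hc0
        · exact h
      rw [hxi1, mul_zero] at C
      exact one_ne_zero C
    · exact hnorm _ h1 (horth v1)
  · exact hnorm _ h0 (horth v0)


lemma aux_circle {m : ℕ} (hm : 1 ≤ m) {C₁ : ℝ} {p : E (m+1) → ℝ}
    (hdiff : ∀ x : E (m+1), x ≠ 0 → HasFDerivAt p (fderiv ℝ p x) x)
    (hgrad : ∀ x : E (m+1), x ≠ 0 → ‖fderiv ℝ p x‖ ≤ C₁ / ‖x‖ ^ 3)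
    (hC₁ : 0 ≤ C₁) {s : ℝ} (hs : 0 < s) {x y : E (m+1)}
    (hx : ‖x‖ = s) (hy : ‖y‖ = s) :
    |p x - p y| ≤ π * C₁ / s ^ 2 := by
  have hxne : x ≠ 0 := by
    intro h; rw [h, norm_zero] at hx; exact hs.ne hx
  set c : ℝ := ⟪x, y⟫ / s ^ 2 with hcdef
  have hxy : ⟪x, y⟫ = c * s ^ 2 := by rw [hcdef, div_mul_cancel₀ _ (by positivity)]
  have hcabs : |c| ≤ 1 := by
    have h1 : |⟪x, y⟫| ≤ s ^ 2 := by
      have := abs_real_inner_le_norm x y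
      rw [hx, hy, ← sq] at this
      exact this
    rw [hcdef, abs_div, abs_of_pos (by positivity : (0:ℝ) < s ^ 2)]
    rw [div_le_one (by positivity)]
    exact h1
  have hc1 : -1 ≤ c := neg_le_of_abs_le hcabs
  have hc2 : c ≤ 1 := le_of_abs_le hcabs
  set θ := Real.arccos c with hθdef
  have hθ0 : 0 ≤ θ := Real.arccos_nonneg c
  have hθπ : θ ≤ π := Real.arccos_le_pi c
  have hcos : Real.cos θ = c := Real.cos_arccos hc1 hc2
  have hsin : Real.sin θ = Real.sqrt (1 - c ^ 2) := Real.sin_arccos c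
  set w := y - c • x with hw
  have hxw : ⟪x, w⟫ = 0 := by
    rw [hw, inner_sub_right, real_inner_smul_right, real_inner_self_eq_norm_sq, hx, hxy]
    ring
  have hwnorm : ‖w‖ ^ 2 = s ^ 2 * (1 - c ^ 2) := by
    rw [hw, norm_sub_sq_real, real_inner_smul_right, real_inner_comm, hxy, norm_smul, hx, hy,
      Real.norm_eq_abs]
    have : |c| ^ 2 = c ^ 2 := sq_abs c
    nlinarith
  obtain ⟨z, hz1, hzx, hyz⟩ :
      ∃ z : E (m+1), ‖z‖ = 1 ∧ ⟪x, z⟫ = 0 ∧ y = Real.cos θ • x + (s * Real.sin θ) • z := by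
    by_cases hw0 : w = 0
    · obtain ⟨z, hz1, hzx⟩ := aux_orth hm x hxne
      refine ⟨z, hz1, hzx, ?_⟩
      have hy' : y = c • x := by rwa [hw, sub_eq_zero] at hw0
      have hc2' : 1 - c ^ 2 = 0 := by
        have : ‖w‖ ^ 2 = 0 := by rw [hw0]; simp
        rw [hwnorm] at this
        rcases mul_eq_zero.mp this with h | h
        · nlinarith
        · exact h
      have hsin0 : Real.sin θ = 0 := by rw [hsin, hc2']; simp
      rw [hy', hcos, hsin0]
      simp
    · refine ⟨‖w‖⁻¹ • w, ?_, ?_, ?_⟩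
      · rw [norm_smul, norm_inv, norm_norm, inv_mul_cancel₀ (norm_ne_zero_iff.mpr hw0)]
      · rw [real_inner_smul_right, hxw, mul_zero]
      · have hwpos : 0 < ‖w‖ := norm_pos_iff.mpr hw0
        have hwn : ‖w‖ = s * Real.sin θ := by
          have h1 : ‖w‖ = Real.sqrt (s ^ 2 * (1 - c ^ 2)) := by
            rw [← hwnorm, Real.sqrt_sq (norm_nonneg w)]
          rw [h1, hsin, Real.sqrt_mul (sq_nonneg s), Real.sqrt_sq hs.le]
        rw [hcos, ← hwn, smul_smul, mul_inv_cancel₀ hwpos.ne', one_smul, hw]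
        abel
  -- the path along the circle
  set γ : ℝ → E (m+1) := fun t => Real.cos t • x + (s * Real.sin t) • z with hγdef
  have hcomb : ∀ a b : ℝ, a ^ 2 + b ^ 2 = 1 → ‖a • x + (s * b) • z‖ = s := by
    intro a b hab
    have h2 : ‖a • x + (s * b) • z‖ ^ 2 = s ^ 2 := by
      rw [norm_add_sq_real, real_inner_smul_left, real_inner_smul_right, hzx, norm_smul,
        norm_smul, hz1, hx, Real.norm_eq_abs, Real.norm_eq_abs]
      have h3 : |a| ^ 2 = a ^ 2 := sq_abs a
      have h4 : |s * b| ^ 2 = (s * b) ^ 2 := sq_abs _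
      nlinarith
    have := congrArg Real.sqrt h2
    rwa [Real.sqrt_sq (norm_nonneg _), Real.sqrt_sq hs.le] at this
  have hγs : ∀ t, ‖γ t‖ = s := fun t =>
    hcomb _ _ (by rw [add_comm]; exact Real.sin_sq_add_cos_sq t)
  have hγne : ∀ t, γ t ≠ 0 := by
    intro t h
    have := hγs t
    rw [h, norm_zero] at this
    exact hs.ne this
  have hγ' : ∀ t, HasDerivAt γ ((-Real.sin t) • x + (s * Real.cos t) • z) t := by
    intro t
    exact ((Real.hasDerivAt_cos t).smul_const x).add
      (((Real.hasDerivAt_sin t).const_mul s).smul_const z)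
  have hγ's : ∀ t, ‖(-Real.sin t) • x + (s * Real.cos t) • z‖ = s := fun t =>
    hcomb _ _ (by rw [neg_pow]; simp [Real.sin_sq_add_cos_sq])
  have hder : ∀ t, HasDerivAt (fun u => p (γ u))
      (fderiv ℝ p (γ t) ((-Real.sin t) • x + (s * Real.cos t) • z)) t :=
    fun t => (hdiff _ (hγne t)).comp_hasDerivAt t (hγ' t)
  have hbound : ∀ t, ‖fderiv ℝ p (γ t) ((-Real.sin t) • x + (s * Real.cos t) • z)‖ ≤ C₁ / s ^ 2 := by
    intro t
    calc ‖fderiv ℝ p (γ t) ((-Real.sin t) • x + (s * Real.cos t) • z)‖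
        ≤ ‖fderiv ℝ p (γ t)‖ * ‖(-Real.sin t) • x + (s * Real.cos t) • z‖ :=
          (fderiv ℝ p (γ t)).le_opNorm _
      _ ≤ (C₁ / s ^ 3) * s := by
          rw [hγ's t]
          apply mul_le_mul_of_nonneg_right _ hs.le
          have := hgrad _ (hγne t)
          rwa [hγs t] at this
      _ = C₁ / s ^ 2 := by field_simp
  have hmvt := norm_image_sub_le_of_norm_deriv_le_segment'
    (f := fun u => p (γ u))
    (f' := fun t => fderiv ℝ p (γ t) ((-Real.sin t) • x + (s * Real.cos t) • z))
    (fun t _ => (hder t).hasDerivWithinAt) (fun t _ => hbound t) θ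
    (Set.right_mem_Icc.mpr hθ0)
  have hh0 : p (γ 0) = p x := by
    simp [hγdef]
  have hhθ : p (γ θ) = p y := by
    rw [hγdef]
    simp only
    rw [← hyz]
  have hmvt' : |p y - p x| ≤ C₁ / s ^ 2 * (θ - 0) := by
    have h := hmvt
    rwa [hh0, hhθ, Real.norm_eq_abs] at h
  rw [abs_sub_comm]
  calc |p y - p x| ≤ C₁ / s ^ 2 * (θ - 0) := hmvt'
    _ ≤ C₁ / s ^ 2 * π := by
        apply mul_le_mul_of_nonneg_left _ (by positivity)
        linarith
    _ = π * C₁ / s ^ 2 := by ring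


lemma aux_inv_sq_tendsto :
    Tendsto (fun k : ℕ => ((((k:ℝ)+1) ^ 2)⁻¹)) atTop (nhds 0) := by
  apply tendsto_inv_atTop_zero.comp
  apply tendsto_atTop_mono (fun k : ℕ => ?_) (tendsto_natCast_atTop_atTop (R := ℝ))
  nlinarith [Nat.cast_nonneg (α := ℝ) k]

lemma aux_master {m : ℕ} (hm : 1 ≤ m) {C₁ : ℝ} {p : E (m+1) → ℝ}
    (hdiff : ∀ x : E (m+1), x ≠ 0 → HasFDerivAt p (fderiv ℝ p x) x)
    (hgrad : ∀ x : E (m+1), x ≠ 0 → ‖fderiv ℝ p x‖ ≤ C₁ / ‖x‖ ^ 3)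
    (hC₁ : 0 ≤ C₁) :
    ∃ L : ℝ, ∀ x : E (m+1), x ≠ 0 → |p x - L| ≤ C₁ / 2 * (‖x‖ ^ 2)⁻¹ := by
  set ω₀ : E (m+1) := EuclideanSpace.single ⟨0, by omega⟩ (1:ℝ) with hω₀def
  have hω₀ : ‖ω₀‖ = 1 := by simp [hω₀def]
  set a : ℕ → ℝ := fun k => p (((k:ℝ)+1) • ω₀) with hadef
  have hstep : ∀ j k : ℕ, j ≤ k →
      |a k - a j| ≤ C₁ / 2 * (((((j:ℝ)+1)) ^ 2)⁻¹ - ((((k:ℝ)+1)) ^ 2)⁻¹) := by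
    intro j k h
    exact aux_radial hdiff hgrad hω₀ (by positivity)
      (by have := (Nat.cast_le (α := ℝ)).mpr h; linarith)
  have hcauchy : CauchySeq a := by
    apply cauchySeq_of_le_tendsto_0 (fun N : ℕ => C₁ / 2 * ((((N:ℝ)+1)) ^ 2)⁻¹)
    · intro k j N hk hj
      have key : ∀ u v : ℕ, N ≤ u → u ≤ v →
          dist (a v) (a u) ≤ C₁ / 2 * ((((N:ℝ)+1)) ^ 2)⁻¹ := by
        intro u v hu huv
        rw [Real.dist_eq]
        refine (hstep u v huv).trans ?_
        have h1 : ((((u:ℝ)+1)) ^ 2)⁻¹ ≤ ((((N:ℝ)+1)) ^ 2)⁻¹ := by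
          have hNu : ((N:ℝ)+1) ≤ ((u:ℝ)+1) := by
            have := (Nat.cast_le (α := ℝ)).mpr hu; linarith
          exact inv_anti₀ (by positivity) (pow_le_pow_left₀ (by positivity) hNu 2)
        have h2 : (0:ℝ) ≤ ((((v:ℝ)+1)) ^ 2)⁻¹ := by positivity
        nlinarith
      rcases le_total k j with h | h
      · rw [dist_comm]; exact key k j hk h
      · exact key j k hj h
    · have := aux_inv_sq_tendsto.const_mul (C₁ / 2)
      simpa using this
  obtain ⟨L, hL⟩ := cauchySeq_tendsto_of_complete hcauchy
  refine ⟨L, fun x hx => ?_⟩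
  have hr : 0 < ‖x‖ := norm_pos_iff.mpr hx
  set u : E (m+1) := ‖x‖⁻¹ • x with hudef
  have hu : ‖u‖ = 1 := by
    rw [hudef, norm_smul, norm_inv, norm_norm, inv_mul_cancel₀ hr.ne']
  have hxu : x = ‖x‖ • u := by
    rw [hudef, smul_smul, mul_inv_cancel₀ hr.ne', one_smul]
  have hkey : ∀ k : ℕ, ‖x‖ ≤ (k:ℝ)+1 →
      |p x - a k| ≤ C₁ / 2 * ((‖x‖ ^ 2)⁻¹ - ((((k:ℝ)+1)) ^ 2)⁻¹) + π * C₁ * ((((k:ℝ)+1)) ^ 2)⁻¹ := by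
    intro k hk
    have hk0 : (0:ℝ) < (k:ℝ)+1 := lt_of_lt_of_le hr hk
    have h1 : |p (((k:ℝ)+1) • u) - p (‖x‖ • u)| ≤ C₁ / 2 * ((‖x‖ ^ 2)⁻¹ - ((((k:ℝ)+1)) ^ 2)⁻¹) :=
      aux_radial hdiff hgrad hu hr hk
    have hnu : ‖((k:ℝ)+1) • u‖ = (k:ℝ)+1 := by
      rw [norm_smul, hu, mul_one, Real.norm_eq_abs, abs_of_pos hk0]
    have hnω : ‖((k:ℝ)+1) • ω₀‖ = (k:ℝ)+1 := by
      rw [norm_smul, hω₀, mul_one, Real.norm_eq_abs, abs_of_pos hk0]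
    have h2 : |p (((k:ℝ)+1) • u) - p (((k:ℝ)+1) • ω₀)| ≤ π * C₁ / ((k:ℝ)+1) ^ 2 :=
      aux_circle hm hdiff hgrad hC₁ hk0 hnu hnω
    have hsplit : p x - a k = (p (‖x‖ • u) - p (((k:ℝ)+1) • u)) +
        (p (((k:ℝ)+1) • u) - p (((k:ℝ)+1) • ω₀)) := by
      rw [← hxu, hadef]
      ring
    rw [hsplit]
    have h3 := abs_add_le (p (‖x‖ • u) - p (((k:ℝ)+1) • u))
      (p (((k:ℝ)+1) • u) - p (((k:ℝ)+1) • ω₀))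
    rw [abs_sub_comm] at h1
    have h4 : π * C₁ / ((k:ℝ)+1) ^ 2 = π * C₁ * ((((k:ℝ)+1)) ^ 2)⁻¹ := by ring
    rw [h4] at h2
    linarith
  have hTa : Tendsto (fun k : ℕ => |p x - a k|) atTop (nhds |p x - L|) :=
    ((tendsto_const_nhds.sub hL).abs)
  have hTb : Tendsto (fun k : ℕ => C₁ / 2 * ((‖x‖ ^ 2)⁻¹ - ((((k:ℝ)+1)) ^ 2)⁻¹)
      + π * C₁ * ((((k:ℝ)+1)) ^ 2)⁻¹) atTop
      (nhds (C₁ / 2 * ((‖x‖ ^ 2)⁻¹ - 0) + π * C₁ * 0)) :=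
    (((tendsto_const_nhds (x := (‖x‖ ^ 2)⁻¹)).sub aux_inv_sq_tendsto).const_mul (C₁/2)).add
      (aux_inv_sq_tendsto.const_mul (π * C₁))
  have hev : ∀ᶠ k : ℕ in atTop, |p x - a k| ≤ C₁ / 2 * ((‖x‖ ^ 2)⁻¹ - ((((k:ℝ)+1)) ^ 2)⁻¹)
      + π * C₁ * ((((k:ℝ)+1)) ^ 2)⁻¹ := by
    obtain ⟨N, hN⟩ := exists_nat_ge ‖x‖
    filter_upwards [eventually_ge_atTop N] with k hk
    apply hkey
    have : (N:ℝ) ≤ (k:ℝ) := Nat.cast_le.mpr hk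
    linarith
  have := le_of_tendsto_of_tendsto hTa hTb hev
  simpa using this


lemma aux_measure (m : ℕ) (hm : 1 ≤ m) :
    0 < μH[((m + 1 : ℕ) : ℝ) - 1] (Metric.sphere (0 : E (m+1)) 1) ∧
    μH[((m + 1 : ℕ) : ℝ) - 1] (Metric.sphere (0 : E (m+1)) 1) < ⊤ := by
  have hd : ((m + 1 : ℕ) : ℝ) - 1 = ((Fintype.card (Fin m) : ℕ) : ℝ) := by
    simp
  have hd0 : (0:ℝ) ≤ ((m + 1 : ℕ) : ℝ) - 1 := by
    push_cast
    have : (0:ℝ) ≤ (m:ℝ) := Nat.cast_nonneg m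
    linarith
  set q : (Fin m → ℝ) → ℝ := fun y => ∑ j, y j ^ 2 with hqdef
  have hq0 : ∀ y, 0 ≤ q y := fun y => Finset.sum_nonneg fun j _ => sq_nonneg _
  have hq1 : ∀ y, 1 + q y ≠ 0 := fun y => by have := hq0 y; positivity
  have hqcd : ContDiff ℝ 1 q :=
    ContDiff.sum fun j _ => ((ContinuousLinearMap.proj j :
      (Fin m → ℝ) →L[ℝ] ℝ).contDiff).pow 2
  set σ0 : (Fin m → ℝ) → (Fin (m+1) → ℝ) := fun y i =>
    (1 + q y)⁻¹ * (if h : (i:ℕ) < m then 2 * y ⟨i.1, h⟩ else 1 - q y) with hσ0def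
  set σ : (Fin m → ℝ) → E (m+1) := fun y =>
    (PiLp.continuousLinearEquiv 2 ℝ (fun _ : Fin (m+1) => ℝ)).symm (σ0 y) with hσdef
  have hσcoord : ∀ y i, σ y i = σ0 y i := fun y i => rfl
  have hσcd : ContDiff ℝ 1 σ := by
    apply (((PiLp.continuousLinearEquiv 2 ℝ (fun _ : Fin (m+1) => ℝ)).symm :
      (Fin (m+1) → ℝ) →L[ℝ] E (m+1)).contDiff).comp
    apply contDiff_pi.mpr
    intro i
    by_cases h : (i:ℕ) < m
    · simp only [hσ0def, dif_pos h]
      exact ((contDiff_const.add hqcd).inv hq1).mul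
        (contDiff_const.mul (ContinuousLinearMap.proj (⟨i.1, h⟩ : Fin m) :
          (Fin m → ℝ) →L[ℝ] ℝ).contDiff)
    · simp only [hσ0def, dif_neg h]
      exact ((contDiff_const.add hqcd).inv hq1).mul (contDiff_const.sub hqcd)
  -- coordinate values
  have hcastv : ∀ y (j : Fin m), σ0 y (Fin.castSucc j) = (1 + q y)⁻¹ * (2 * y j) := by
    intro y j
    have hlt : ((Fin.castSucc j : Fin (m+1)) : ℕ) < m := j.isLt
    simp only [hσ0def, dif_pos hlt]
    have he : (⟨((Fin.castSucc j : Fin (m+1)) : ℕ), hlt⟩ : Fin m) = j := Fin.ext (by simp)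
    rw [he]
  have hlastv : ∀ y, σ0 y (Fin.last m) = (1 + q y)⁻¹ * (1 - q y) := by
    intro y
    have : ¬ ((Fin.last m : Fin (m+1)) : ℕ) < m := by simp
    simp only [hσ0def, dif_neg this]
  -- σ maps into the sphere
  have hσsph : ∀ y, ‖σ y‖ = 1 := by
    intro y
    have hsum : ∑ i : Fin (m+1), (σ0 y i) ^ 2 = 1 := by
      rw [Fin.sum_univ_castSucc, hlastv]
      have h1 : ∀ j : Fin m, (σ0 y (Fin.castSucc j)) ^ 2 = ((1 + q y)⁻¹)^2 * (4 * y j ^ 2) := by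
        intro j; rw [hcastv]; ring
      rw [Finset.sum_congr rfl fun j _ => h1 j, ← Finset.mul_sum]
      have h2 : ∑ j : Fin m, 4 * y j ^ 2 = 4 * q y := by
        rw [hqdef, Finset.mul_sum]
      rw [h2]
      have := hq1 y
      field_simp
      ring
    rw [hσdef]
    simp only
    rw [EuclideanSpace.norm_eq]
    have h3 : ∀ i : Fin (m+1),
        ‖(PiLp.continuousLinearEquiv 2 ℝ (fun _ : Fin (m+1) => ℝ)).symm (σ0 y) i‖ ^ 2
          = (σ0 y i)^2 := by
      intro i
      rw [Real.norm_eq_abs, sq_abs]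
      rfl
    rw [Finset.sum_congr rfl fun i _ => h3 i, hsum, Real.sqrt_one]
  -- Lipschitz bound on closed ball
  obtain ⟨M, hM⟩ := (isCompact_closedBall (0 : Fin m → ℝ) 1).exists_bound_of_continuousOn
    ((hσcd.continuous_fderiv one_ne_zero).continuousOn)
  set K : ℝ≥0 := ⟨max M 0, le_max_right M 0⟩ with hKdef
  have hKb : ∀ y ∈ closedBall (0 : Fin m → ℝ) 1, ‖fderiv ℝ σ y‖₊ ≤ K := by
    intro y hy
    have h1 : ‖fderiv ℝ σ y‖ ≤ (K : ℝ) := le_trans (hM y hy) (le_max_left M 0)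
    exact_mod_cast h1
  have hLip : LipschitzOnWith K σ (closedBall 0 1) :=
    Convex.lipschitzOnWith_of_nnnorm_fderiv_le (fun y _ => (hσcd.differentiable one_ne_zero) y) hKb
      (convex_closedBall 0 1)
  have hcapfin : μH[((m + 1 : ℕ) : ℝ) - 1] (σ '' closedBall 0 1) < ⊤ := by
    refine lt_of_le_of_lt (hLip.hausdorffMeasure_image_le hd0) ?_
    apply ENNReal.mul_lt_top
    · exact ENNReal.rpow_lt_top_of_nonneg hd0 ENNReal.coe_ne_top
    · rw [hd, hausdorffMeasure_pi_real]
      exact (isCompact_closedBall _ _).measure_lt_top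
  -- covering the sphere
  have hcover : ∀ x : E (m+1), ‖x‖ = 1 → 0 ≤ x (Fin.last m) → x ∈ σ '' closedBall 0 1 := by
    intro x hx ht
    set t : ℝ := x (Fin.last m) with htdef
    have hsum1 : ∑ i : Fin (m+1), (x i)^2 = 1 := by
      have h1 := EuclideanSpace.norm_eq x
      rw [hx] at h1
      have h2 : ∑ i : Fin (m+1), ‖x i‖^2 = 1 := by
        have := congrArg (fun u : ℝ => u ^ 2) h1
        simp only [one_pow] at this
        rw [Real.sq_sqrt (Finset.sum_nonneg fun i _ => sq_nonneg _)] at this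
        exact this.symm
      rw [← h2]
      exact Finset.sum_congr rfl fun i _ => by rw [Real.norm_eq_abs, sq_abs]
    have hs2 : ∑ j : Fin m, (x (Fin.castSucc j))^2 = 1 - t^2 := by
      rw [Fin.sum_univ_castSucc] at hsum1
      rw [← htdef] at hsum1
      linarith
    have h1t : (0:ℝ) < 1 + t := by
      have ht2 : t^2 ≤ 1 := by
        have : (0:ℝ) ≤ ∑ j : Fin m, (x (Fin.castSucc j))^2 :=
          Finset.sum_nonneg fun j _ => sq_nonneg _
        nlinarith
      nlinarith
    set y : Fin m → ℝ := fun j => x (Fin.castSucc j) / (1 + t) with hydef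
    have hqy : q y = (1 - t) / (1 + t) := by
      have h1 : q y = (∑ j : Fin m, (x (Fin.castSucc j))^2) / (1 + t)^2 := by
        rw [hqdef, Finset.sum_div]
        exact Finset.sum_congr rfl fun j _ => by rw [hydef, div_pow]
      rw [h1, hs2]
      rw [div_eq_div_iff (by positivity) h1t.ne']
      ring
    have hyball : y ∈ closedBall (0 : Fin m → ℝ) 1 := by
      rw [mem_closedBall_zero_iff]
      rw [pi_norm_le_iff_of_nonneg zero_le_one]
      intro j
      rw [Real.norm_eq_abs, hydef]
      have hj2 : (x (Fin.castSucc j))^2 ≤ 1 - t^2 := by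
        rw [← hs2]
        exact Finset.single_le_sum (f := fun k : Fin m => (x (Fin.castSucc k))^2)
          (fun k _ => sq_nonneg _) (Finset.mem_univ j)
      rw [abs_div, abs_of_pos h1t, div_le_one h1t]
      have h5 : (x (Fin.castSucc j))^2 ≤ (1+t)^2 := by nlinarith
      calc |x (Fin.castSucc j)| = Real.sqrt ((x (Fin.castSucc j))^2) :=
            (Real.sqrt_sq_eq_abs _).symm
        _ ≤ Real.sqrt ((1+t)^2) := Real.sqrt_le_sqrt h5
        _ = 1 + t := Real.sqrt_sq h1t.le
    refine ⟨y, hyball, ?_⟩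
    have h1qinv : (1 + q y)⁻¹ = (1 + t) / 2 := by
      rw [hqy]
      rw [show 1 + (1 - t) / (1 + t) = 2 / (1 + t) by field_simp; ring]
      rw [inv_div]
    ext i
    refine Fin.lastCases ?_ ?_ i
    · rw [hσcoord, hlastv, h1qinv, hqy, ← htdef]
      field_simp
      ring
    · intro j
      rw [hσcoord, hcastv, h1qinv, hydef]
      field_simp
  have hsub : Metric.sphere (0 : E (m+1)) 1 ⊆
      σ '' closedBall 0 1 ∪ Neg.neg '' (σ '' closedBall 0 1) := by
    intro x hx
    have hx1 : ‖x‖ = 1 := by rwa [mem_sphere_zero_iff_norm] at hx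
    rcases le_or_gt 0 (x (Fin.last m)) with h | h
    · exact Or.inl (hcover x hx1 h)
    · refine Or.inr ⟨-x, hcover (-x) (by rw [norm_neg, hx1]) ?_, neg_neg x⟩
      have : (-x) (Fin.last m) = -(x (Fin.last m)) := rfl
      rw [this]
      linarith
  have hfin : μH[((m + 1 : ℕ) : ℝ) - 1] (Metric.sphere (0 : E (m+1)) 1) < ⊤ := by
    refine lt_of_le_of_lt (measure_mono hsub) ?_
    refine lt_of_le_of_lt (measure_union_le _ _) ?_
    rw [Isometry.hausdorffMeasure_image isometry_neg (Or.inr neg_surjective)]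
    exact ENNReal.add_lt_top.mpr ⟨hcapfin, hcapfin⟩
  -- positivity
  have habs : ∀ (v : E (m+1)) (i : Fin (m+1)), |v i| ≤ ‖v‖ := by
    intro v i
    rw [EuclideanSpace.norm_eq]
    calc |v i| = Real.sqrt ((v i)^2) := (Real.sqrt_sq_eq_abs _).symm
      _ ≤ Real.sqrt (∑ k : Fin (m+1), ‖v k‖^2) := by
          apply Real.sqrt_le_sqrt
          have : (v i)^2 = ‖v i‖^2 := by rw [Real.norm_eq_abs, sq_abs]
          rw [this]
          exact Finset.single_le_sum (f := fun k : Fin (m+1) => ‖v k‖^2)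
            (fun k _ => sq_nonneg _) (Finset.mem_univ i)
  set P : E (m+1) → (Fin m → ℝ) := fun x j => x (Fin.castSucc j) with hPdef
  have hP : LipschitzWith 1 P := by
    apply LipschitzWith.of_dist_le_mul
    intro a b
    simp only [NNReal.coe_one, one_mul]
    rw [dist_pi_le_iff dist_nonneg]
    intro j
    show dist (a (Fin.castSucc j)) (b (Fin.castSucc j)) ≤ dist a b
    rw [Real.dist_eq, dist_eq_norm]
    have h1 : a (Fin.castSucc j) - b (Fin.castSucc j) = (a - b) (Fin.castSucc j) := rfl
    rw [h1]
    exact habs (a - b) (Fin.castSucc j)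
  have hmpos : (0:ℝ) < m := by exact_mod_cast Nat.lt_of_lt_of_le Nat.zero_lt_one hm
  have hball_sub : closedBall (0 : Fin m → ℝ) ((Real.sqrt m)⁻¹) ⊆
      P '' Metric.sphere (0 : E (m+1)) 1 := by
    intro y hy
    have hyj : ∀ j, (y j)^2 ≤ (m:ℝ)⁻¹ := by
      intro j
      have h1 : |y j| ≤ (Real.sqrt m)⁻¹ := by
        have h2 := norm_le_pi_norm y j
        rw [mem_closedBall_zero_iff] at hy
        rw [Real.norm_eq_abs] at h2
        linarith
      calc (y j)^2 = |y j|^2 := (sq_abs _).symm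
        _ ≤ ((Real.sqrt m)⁻¹)^2 := pow_le_pow_left₀ (abs_nonneg _) h1 2
        _ = (m:ℝ)⁻¹ := by rw [inv_pow, Real.sq_sqrt hmpos.le]
    have hqy1 : (∑ j : Fin m, (y j)^2) ≤ 1 := by
      calc ∑ j : Fin m, (y j)^2 ≤ ∑ _j : Fin m, (m:ℝ)⁻¹ :=
            Finset.sum_le_sum fun j _ => hyj j
        _ = (m:ℝ) * (m:ℝ)⁻¹ := by
            rw [Finset.sum_const, Finset.card_univ, Fintype.card_fin, nsmul_eq_mul]
        _ = 1 := mul_inv_cancel₀ hmpos.ne'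
    set x : E (m+1) := (PiLp.continuousLinearEquiv 2 ℝ (fun _ : Fin (m+1) => ℝ)).symm
      (fun i => if h : (i:ℕ) < m then y ⟨i.1, h⟩ else Real.sqrt (1 - ∑ j : Fin m, (y j)^2))
      with hxdef
    have hxc : ∀ i : Fin (m+1),
        x i = if h : (i:ℕ) < m then y ⟨i.1, h⟩ else Real.sqrt (1 - ∑ j : Fin m, (y j)^2) :=
      fun i => rfl
    refine ⟨x, ?_, ?_⟩
    · rw [mem_sphere_zero_iff_norm, EuclideanSpace.norm_eq]
      have h6 : ∑ i : Fin (m+1), ‖x i‖^2 = 1 := by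
        have h7 : ∀ i : Fin (m+1), ‖x i‖^2 = (x i)^2 := fun i => by
          rw [Real.norm_eq_abs, sq_abs]
        rw [Finset.sum_congr rfl fun i _ => h7 i, Fin.sum_univ_castSucc]
        have h8 : ∀ j : Fin m, (x (Fin.castSucc j))^2 = (y j)^2 := by
          intro j
          rw [hxc]
          have hlt : ((Fin.castSucc j : Fin (m+1)) : ℕ) < m := j.isLt
          rw [dif_pos hlt]
          have he : (⟨((Fin.castSucc j : Fin (m+1)) : ℕ), hlt⟩ : Fin m) = j := Fin.ext (by simp)
          rw [he]
        have h9 : (x (Fin.last m))^2 = 1 - ∑ j : Fin m, (y j)^2 := by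
          rw [hxc]
          have : ¬ ((Fin.last m : Fin (m+1)) : ℕ) < m := by simp
          rw [dif_neg this, Real.sq_sqrt (by linarith)]
        rw [Finset.sum_congr rfl fun j _ => h8 j, h9]
        ring
      rw [h6, Real.sqrt_one]
    · funext j
      rw [hPdef]
      simp only
      rw [hxc]
      have hlt : ((Fin.castSucc j : Fin (m+1)) : ℕ) < m := j.isLt
      rw [dif_pos hlt]
      exact congrArg y (Fin.ext (by simp))
  have hpos : 0 < μH[((m + 1 : ℕ) : ℝ) - 1] (Metric.sphere (0 : E (m+1)) 1) := by
    have h1 : μH[((m + 1 : ℕ) : ℝ) - 1] (closedBall (0 : Fin m → ℝ) ((Real.sqrt m)⁻¹)) ≤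
        μH[((m + 1 : ℕ) : ℝ) - 1] (P '' Metric.sphere (0 : E (m+1)) 1) :=
      measure_mono hball_sub
    have h2 := hP.hausdorffMeasure_image_le hd0 (Metric.sphere (0 : E (m+1)) 1)
    have h3 : 0 < μH[((m + 1 : ℕ) : ℝ) - 1] (closedBall (0 : Fin m → ℝ) ((Real.sqrt m)⁻¹)) := by
      rw [hd, hausdorffMeasure_pi_real]
      exact measure_closedBall_pos volume _ (by positivity)
    have h4 : ((1:ℝ≥0) : ℝ≥0∞) ^ (((m + 1 : ℕ) : ℝ) - 1) = 1 := by
      rw [ENNReal.coe_one, ENNReal.one_rpow]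
    rw [h4, one_mul] at h2
    exact lt_of_lt_of_le h3 (le_trans h1 h2)
  exact ⟨hpos, hfin⟩

/-- if `p` is smooth on `ℝⁿ \ {0}` (`n ≥ 2`) with `|∇p(x)| ≤ C₁/|x|³`,
then the spherical averages `p̄(r)` converge as `r → ∞`, and if that limit is `0`, then
`|p(x)| ≤ 2C₁/|x|²` for all `x ≠ 0`. -/
theorem stmt12 (n : ℕ) (hn : 2 ≤ n) (C₁ : ℝ) (p : E n → ℝ)
    (hsm : ContDiffOn ℝ (⊤ : ℕ∞) p {(0 : E n)}ᶜ)
    (hgrad : ∀ x : E n, x ≠ 0 → ‖fderiv ℝ p x‖ ≤ C₁ / ‖x‖ ^ 3) :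
    (∃ L : ℝ, Tendsto (pbar p) atTop (nhds L))
    ∧ (Tendsto (pbar p) atTop (nhds 0) →
        ∀ x : E n, x ≠ 0 → |p x| ≤ 2 * C₁ / ‖x‖ ^ 2) := by
  obtain ⟨m, rfl⟩ : ∃ m, n = m + 1 := ⟨n - 1, by omega⟩
  have hm : 1 ≤ m := by omega
  -- C₁ is nonnegative
  have hC₁ : 0 ≤ C₁ := by
    set x₀ : E (m+1) := EuclideanSpace.single ⟨0, by omega⟩ (1:ℝ) with hx₀def
    have hx₀n : ‖x₀‖ = 1 := by simp [hx₀def]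
    have hx₀ : x₀ ≠ 0 := by
      intro h
      rw [h, norm_zero] at hx₀n
      exact one_ne_zero hx₀n.symm
    have := hgrad x₀ hx₀
    rw [hx₀n] at this
    have h0 := norm_nonneg (fderiv ℝ p x₀)
    simp only [one_pow, div_one] at this
    linarith
  -- differentiability away from the origin
  have hdiff : ∀ x : E (m+1), x ≠ 0 → HasFDerivAt p (fderiv ℝ p x) x := by
    intro x hx
    have h1 : DifferentiableOn ℝ p {(0 : E (m+1))}ᶜ := hsm.differentiableOn (by simp)
    have h2 : DifferentiableAt ℝ p x :=
      h1.differentiableAt ((isOpen_compl_singleton).mem_nhds (by simpa using hx))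
    exact h2.hasFDerivAt
  obtain ⟨L, hL⟩ := aux_master hm hdiff hgrad hC₁
  obtain ⟨hpos, hfin⟩ := aux_measure m hm
  set S := Metric.sphere (0 : E (m+1)) 1 with hSdef
  set μ : Measure (E (m+1)) := μH[((m + 1 : ℕ) : ℝ) - 1] with hμdef
  set c : ℝ := (μ S).toReal with hcdef
  have hc : 0 < c := ENNReal.toReal_pos hpos.ne' hfin.ne
  have hSm : MeasurableSet S := Metric.isClosed_sphere.measurableSet
  haveI : IsFiniteMeasure (μ.restrict S) :=
    ⟨by rwa [Measure.restrict_apply_univ]⟩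
  have hbar : ∀ r : ℝ, 0 < r → |pbar p r - L| ≤ C₁ / 2 * (r ^ 2)⁻¹ := by
    intro r hr
    have hrω : ∀ ω : E (m+1), ω ∈ S → ‖r • ω‖ = r := by
      intro ω hω
      have : ‖ω‖ = 1 := by rwa [hSdef, mem_sphere_zero_iff_norm] at hω
      rw [norm_smul, this, mul_one, Real.norm_eq_abs, abs_of_pos hr]
    have hrne : ∀ ω : E (m+1), ω ∈ S → r • ω ≠ 0 := by
      intro ω hω h
      have := hrω ω hω
      rw [h, norm_zero] at this
      exact hr.ne this
    have hptb : ∀ ω ∈ S, |p (r • ω) - L| ≤ C₁ / 2 * (r ^ 2)⁻¹ := by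
      intro ω hω
      have := hL (r • ω) (hrne ω hω)
      rwa [hrω ω hω] at this
    have hcont : ContinuousOn (fun ω : E (m+1) => p (r • ω)) S := by
      apply (hsm.continuousOn).comp (continuous_const_smul r).continuousOn
      intro ω hω
      simpa using hrne ω hω
    have hmeas : AEStronglyMeasurable (fun ω : E (m+1) => p (r • ω)) (μ.restrict S) :=
      hcont.aestronglyMeasurable hSm
    have hint : IntegrableOn (fun ω : E (m+1) => p (r • ω)) S μ := by
      refine Integrable.mono' (g := fun _ => |L| + C₁ / 2 * (r ^ 2)⁻¹)
        (integrable_const _) hmeas ?_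
      rw [ae_restrict_iff' hSm]
      filter_upwards with ω hω
      have h1 := hptb ω hω
      rw [Real.norm_eq_abs]
      have h2 : |p (r • ω)| ≤ |p (r • ω) - L| + |L| := by
        calc |p (r • ω)| = |(p (r • ω) - L) + L| := by ring_nf
          _ ≤ |p (r • ω) - L| + |L| := abs_add_le _ _
      linarith
    have hintL : IntegrableOn (fun _ : E (m+1) => L) S μ :=
      integrableOn_const hfin.ne
    have hIL : ∫ ω in S, (p (r • ω) - L) ∂μ = (∫ ω in S, p (r • ω) ∂μ) - c * L := by
      rw [integral_sub hint hintL, setIntegral_const, smul_eq_mul, measureReal_def, hcdef]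
    have hnormI : |∫ ω in S, (p (r • ω) - L) ∂μ| ≤ (C₁ / 2 * (r ^ 2)⁻¹) * c := by
      have := norm_setIntegral_le_of_norm_le_const_ae' (f := fun ω => p (r • ω) - L)
        (C := C₁ / 2 * (r ^ 2)⁻¹) hfin
        (Filter.Eventually.of_forall fun ω hω => by
          rw [Real.norm_eq_abs]; exact hptb ω hω)
      rwa [Real.norm_eq_abs, measureReal_def] at this
    have hpbar : pbar p (r) - L = c⁻¹ * ∫ ω in S, (p (r • ω) - L) ∂μ := by
      rw [hIL]
      have : pbar p r = c⁻¹ * ∫ ω in S, p (r • ω) ∂μ := rfl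
      rw [this]
      field_simp
    rw [hpbar, abs_mul, abs_inv, abs_of_pos hc]
    calc c⁻¹ * |∫ ω in S, (p (r • ω) - L) ∂μ| ≤ c⁻¹ * ((C₁ / 2 * (r ^ 2)⁻¹) * c) := by
          apply mul_le_mul_of_nonneg_left hnormI (inv_nonneg.mpr hc.le)
      _ = C₁ / 2 * (r ^ 2)⁻¹ := by field_simp
  have hTend : Tendsto (pbar p) atTop (nhds L) := by
    rw [tendsto_iff_dist_tendsto_zero]
    have h2 : Tendsto (fun r : ℝ => C₁ / 2 * (r ^ 2)⁻¹) atTop (nhds 0) := by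
      have h1 : Tendsto (fun r : ℝ => (r ^ 2)⁻¹) atTop (nhds 0) :=
        tendsto_inv_atTop_zero.comp (tendsto_pow_atTop two_ne_zero)
      simpa using h1.const_mul (C₁ / 2)
    refine squeeze_zero' (Filter.Eventually.of_forall fun r => dist_nonneg) ?_ h2
    filter_upwards [eventually_gt_atTop (0:ℝ)] with r hr
    rw [Real.dist_eq]
    exact hbar r hr
  refine ⟨⟨L, hTend⟩, fun h0 x hx => ?_⟩
  have hL0 : L = 0 := tendsto_nhds_unique hTend h0
  have hx' : 0 < ‖x‖ := norm_pos_iff.mpr hx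
  have h1 := hL x hx
  rw [hL0, sub_zero] at h1
  calc |p x| ≤ C₁ / 2 * (‖x‖ ^ 2)⁻¹ := h1
    _ ≤ 2 * C₁ * (‖x‖ ^ 2)⁻¹ := by
        apply mul_le_mul_of_nonneg_right (by linarith) (by positivity)
    _ = 2 * C₁ / ‖x‖ ^ 2 := by ring
end
end
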